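/- arXiv:1102.4979 — 3 statements merged into one kernel-verified Lean document; each statement's English description precedes it below -/
import Mathlib

section
/- A bounded-degree connected infinite graph containing a distinguished vertex o and an infinite sequence of distinct vertices v_1, v_2, … with effective resistance R(o, v_i) ≤ C for all i is transient. -/
/-! Every unit flow from `o` to `v i` has energy at most `C`, so all its values lie in
`[-√C, √C]`. By compactness the flows converge pointwise along a free ultrafilter on `ℕ`. The
limit is antisymmetric, supported on edges and has unit outflow at `o`; since the sinks `v i` are
distinct, every `w ≠ o` is a sink of only finitely many of the flows, so the node law holds at `w`
in the limit (the node law is a finite sum by local finiteness). Fatou's lemma bounds the energy of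
the limit by `C`. -/

open Finset Filter Topology

lemma abs_le_sqrt_of_tsum_sq_le {α : Type*} {f : α → ℝ} {C : ℝ}
    (hf : Summable fun a => f a ^ 2) (hC : ∑' a, f a ^ 2 ≤ C) (a : α) : |f a| ≤ √C :=
  Real.abs_le_sqrt <| (hf.le_tsum a fun b _ => sq_nonneg (f b)).trans hC

lemma exists_tendsto_ultrafilter_of_abs_le {ι X : Type*} (u : Ultrafilter ι) (f : ι → X → ℝ)
    {M : ℝ} (hf : ∀ i x, |f i x| ≤ M) :
    ∃ g : X → ℝ, ∀ x, Tendsto (fun i => f i x) u (𝓝 (g x)) := by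
  have hlim (x : X) : ∃ L, Tendsto (fun i => f i x) u (𝓝 L) := by
    have hle : ↑(u.map fun i => f i x) ≤ 𝓟 (Set.Icc (-M) M) := by
      rw [Ultrafilter.coe_map, le_principal_iff, Filter.mem_map]
      exact univ_mem' fun i => abs_le.mp (hf i x)
    obtain ⟨L, -, hL⟩ := isCompact_Icc.ultrafilter_le_nhds _ hle
    exact ⟨L, hL⟩
  choose g hg using hlim
  exact ⟨g, hg⟩

lemma summable_of_tendsto_of_tsum_le {ι α : Type*} {l : Filter ι} [l.NeBot] {f : ι → α → ℝ}
    {g : α → ℝ} {C : ℝ} (hf0 : ∀ i a, 0 ≤ f i a) (hf : ∀ i, Summable (f i))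
    (hC : ∀ i, ∑' a, f i a ≤ C) (hlim : ∀ a, Tendsto (fun i => f i a) l (𝓝 (g a))) :
    Summable g := by
  refine summable_of_sum_le (c := C) (fun a => ge_of_tendsto' (hlim a) (hf0 · a)) fun s => ?_
  refine le_of_tendsto' (tendsto_finsetSum s fun a _ => hlim a) fun i => ?_
  exact ((hf i).sum_le_tsum s fun a _ => hf0 i a).trans (hC i)

theorem stmt_12 {V : Type*} (G : SimpleGraph V) [DecidableRel G.Adj]
    [∀ v : V, Fintype (G.neighborSet v)]
    (hconn : G.Connected) (D : ℕ) (hdeg : ∀ v : V, G.degree v ≤ D)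
    (o : V) (v : ℕ → V) (hinj : Function.Injective v) (C : ℝ)
    -- for every `i` there is a unit flow from `o` to `v i` of energy at most `C`,
    -- i.e. the effective resistance `R(o, v i)` is at most `C`
    (hres : ∀ i : ℕ, ∃ θ : V → V → ℝ,
      (∀ a b : V, θ a b = -θ b a) ∧
      (∀ a b : V, ¬ G.Adj a b → θ a b = 0) ∧
      (∀ w : V, w ≠ o → w ≠ v i → ∑ u ∈ G.neighborFinset w, θ w u = 0) ∧
      (∑ u ∈ G.neighborFinset o, θ o u = 1) ∧
      Summable (fun p : V × V => (θ p.1 p.2) ^ 2) ∧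
      ∑' p : V × V, (θ p.1 p.2) ^ 2 ≤ C) :
    -- transience: there is a finite-energy unit flow from `o` to infinity
    ∃ θ : V → V → ℝ,
      (∀ a b : V, θ a b = -θ b a) ∧
      (∀ a b : V, ¬ G.Adj a b → θ a b = 0) ∧
      (∀ w : V, w ≠ o → ∑ u ∈ G.neighborFinset w, θ w u = 0) ∧
      (∑ u ∈ G.neighborFinset o, θ o u = 1) ∧
      Summable (fun p : V × V => (θ p.1 p.2) ^ 2) := by
  choose Θ hanti hsupp hnode hout hsumm henergy using hres
  obtain ⟨θ, hθ⟩ := exists_tendsto_ultrafilter_of_abs_le (hyperfilter ℕ)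
    (fun i (p : V × V) => Θ i p.1 p.2) fun i => abs_le_sqrt_of_tsum_sq_le (hsumm i) (henergy i)
  have hlim (a b : V) : Tendsto (fun i => Θ i a b) (hyperfilter ℕ) (𝓝 (θ (a, b))) := hθ (a, b)
  have hsum (w : V) : Tendsto (fun i => ∑ u ∈ G.neighborFinset w, Θ i w u) (hyperfilter ℕ)
      (𝓝 (∑ u ∈ G.neighborFinset w, θ (w, u))) :=
    tendsto_finsetSum _ fun u _ => hlim w u
  refine ⟨fun a b => θ (a, b), fun a b => ?_, fun a b hab => ?_, fun w hw => ?_, ?_, ?_⟩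
  · exact tendsto_nhds_unique (hlim a b) <| (hlim b a).neg.congr fun i => (hanti i a b).symm
  · exact tendsto_nhds_unique (hlim a b) <| tendsto_nhds_of_eventually_eq <|
      Eventually.of_forall fun i => hsupp i a b hab
  · have hsink : ∀ᶠ i in hyperfilter ℕ, v i ≠ w :=
      hyperfilter_le_cofinite <| hinj.tendsto_cofinite.eventually (eventually_cofinite_ne w)
    exact tendsto_nhds_unique (hsum w) <| tendsto_nhds_of_eventually_eq <|
      hsink.mono fun i hi => hnode i w hw (Ne.symm hi)
  · exact tendsto_nhds_unique (hsum o) <| tendsto_nhds_of_eventually_eq <| Eventually.of_forall hout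
  · exact summable_of_tendsto_of_tsum_le (fun i p => sq_nonneg _) hsumm henergy
      fun p => (hθ p).pow 2
end

section
/- Rayleigh monotonicity via graph embedding: if f : V(H) → V(G) is an injective map between finite connected graphs such that every edge {u,v} of H with u ≠ v maps to an edge {f(u),f(v)} of G, then for all vertices x,y of H, the effective resistance satisfies R_G(f(x), f(y)) ≤ R_H(x, y). -/
open Finset

variable {V : Type*}

/-- A unit flow from `a` to `b` on a graph. -/
def IsUnitFlow [Fintype V] [DecidableEq V] (G : SimpleGraph V) [DecidableRel G.Adj]
    (a b : V) (θ : V → V → ℝ) : Prop :=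
  (∀ u w : V, θ u w = -θ w u) ∧
  (∀ u w : V, ¬ G.Adj u w → θ u w = 0) ∧
  (∀ w : V, w ≠ a → w ≠ b → ∑ u ∈ G.neighborFinset w, θ w u = 0) ∧
  (∑ u ∈ G.neighborFinset a, θ a u = if a = b then 0 else 1)

lemma zero_unit_flow [Fintype V] [DecidableEq V] (H : SimpleGraph V) [DecidableRel H.Adj]
    (a : V) : IsUnitFlow H a a (fun _ _ => 0) := by
  refine ⟨fun _ _ => by simp, fun _ _ _ => rfl, fun _ _ _ => by simp, by simp⟩

lemma flow_exists [Fintype V] [DecidableEq V] (H : SimpleGraph V) [DecidableRel H.Adj]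
    {x y : V} (p : H.Walk x y) : ∃ θ, IsUnitFlow H x y θ := by
  induction p with
  | nil => exact ⟨_, zero_unit_flow H _⟩
  | @cons x z y h p ih =>
    by_cases hxy : x = y
    · subst hxy; exact ⟨_, zero_unit_flow H _⟩
    obtain ⟨θ₂, hθ₂⟩ := ih
    have hxz : x ≠ z := h.ne
    refine ⟨fun u w => θ₂ u w + (if u = x ∧ w = z then 1 else 0)
        - (if u = z ∧ w = x then 1 else 0), ?_, ?_, ?_, ?_⟩
    · intro u w
      dsimp only
      have e1 : (if w = x ∧ u = z then (1:ℝ) else 0) = (if u = z ∧ w = x then 1 else 0) := by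
        by_cases hc : u = z ∧ w = x
        · rw [if_pos hc, if_pos ⟨hc.2, hc.1⟩]
        · rw [if_neg hc, if_neg (fun hh => hc ⟨hh.2, hh.1⟩)]
      have e2 : (if w = z ∧ u = x then (1:ℝ) else 0) = (if u = x ∧ w = z then 1 else 0) := by
        by_cases hc : u = x ∧ w = z
        · rw [if_pos hc, if_pos ⟨hc.2, hc.1⟩]
        · rw [if_neg hc, if_neg (fun hh => hc ⟨hh.2, hh.1⟩)]
      rw [hθ₂.1 u w, e1, e2]; ring
    · intro u w hnadj
      dsimp only
      have h1 : ¬(u = x ∧ w = z) := by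
        rintro ⟨rfl, rfl⟩; exact hnadj h
      have h2 : ¬(u = z ∧ w = x) := by
        rintro ⟨rfl, rfl⟩; exact hnadj h.symm
      rw [hθ₂.2.1 u w hnadj, if_neg h1, if_neg h2]; ring
    · intro w hwx hwy
      dsimp only
      rw [Finset.sum_sub_distrib, Finset.sum_add_distrib]
      have h2 : ∑ u ∈ H.neighborFinset w, (if w = x ∧ u = z then (1:ℝ) else 0) = 0 := by
        apply Finset.sum_eq_zero; intro u _
        rw [if_neg (fun hh => hwx hh.1)]
      by_cases hwz : w = z
      · subst hwz
        have h1 := hθ₂.2.2.2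
        rw [if_neg hwy] at h1
        have h3 : ∑ u ∈ H.neighborFinset w, (if w = w ∧ u = x then (1:ℝ) else 0) = 1 := by
          simp only [true_and]
          rw [Finset.sum_ite_eq' (H.neighborFinset w) x (fun _ => (1:ℝ))]
          rw [if_pos (by rw [SimpleGraph.mem_neighborFinset]; exact h.symm)]
        rw [h1, h2, h3]; ring
      · have h1 := hθ₂.2.2.1 w hwz hwy
        have h3 : ∑ u ∈ H.neighborFinset w, (if w = z ∧ u = x then (1:ℝ) else 0) = 0 := by
          apply Finset.sum_eq_zero; intro u _
          rw [if_neg (fun hh => hwz hh.1)]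
        rw [h1, h2, h3]; ring
    · dsimp only
      rw [Finset.sum_sub_distrib, Finset.sum_add_distrib]
      have h1 := hθ₂.2.2.1 x hxz hxy
      have h2 : ∑ u ∈ H.neighborFinset x, (if x = x ∧ u = z then (1:ℝ) else 0) = 1 := by
        simp only [true_and]
        rw [Finset.sum_ite_eq' (H.neighborFinset x) z (fun _ => (1:ℝ))]
        rw [if_pos (by rw [SimpleGraph.mem_neighborFinset]; exact h)]
      have h3 : ∑ u ∈ H.neighborFinset x, (if x = z ∧ u = x then (1:ℝ) else 0) = 0 := by
        apply Finset.sum_eq_zero; intro u _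
        rw [if_neg (fun hh => hxz hh.1)]
      rw [h1, h2, h3, if_neg hxy]; ring

/-- The energy of a flow (unit conductances; each undirected edge counted once). -/
noncomputable def flowEnergy [Fintype V] (θ : V → V → ℝ) : ℝ :=
  (1 / 2) * ∑ p : V × V, (θ p.1 p.2) ^ 2

/-- Effective resistance (unit conductances) via Thompson's principle. -/
noncomputable def effRes [Fintype V] [DecidableEq V] (G : SimpleGraph V)
    [DecidableRel G.Adj] (a b : V) : ℝ :=
  sInf { E : ℝ | ∃ θ : V → V → ℝ, IsUnitFlow G a b θ ∧ E = flowEnergy θ }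

theorem stmt_14 {W : Type*} [Fintype V] [DecidableEq V] [Fintype W] [DecidableEq W]
    (H : SimpleGraph V) [DecidableRel H.Adj] (G : SimpleGraph W) [DecidableRel G.Adj]
    (hHconn : H.Connected) (hGconn : G.Connected)
    (f : V → W) (hinj : Function.Injective f)
    (hedge : ∀ u v : V, H.Adj u v → G.Adj (f u) (f v))
    (x y : V) :
    effRes G (f x) (f y) ≤ effRes H x y := by
  have hsub : { E : ℝ | ∃ θ : V → V → ℝ, IsUnitFlow H x y θ ∧ E = flowEnergy θ } ⊆
      { E : ℝ | ∃ θ : W → W → ℝ, IsUnitFlow G (f x) (f y) θ ∧ E = flowEnergy θ } := by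
    rintro E ⟨θ, hθ, rfl⟩
    set θ' : W → W → ℝ := fun a b => ∑ u : V, ∑ v : V, if f u = a ∧ f v = b then θ u v else 0
      with hθ'def
    -- key evaluation lemma
    have key : ∀ u v : V, θ' (f u) (f v) = θ u v := by
      intro u v
      rw [hθ'def]
      dsimp only
      have step : ∀ u' v' : V, (if f u' = f u ∧ f v' = f v then θ u' v' else 0)
          = if u' = u ∧ v' = v then θ u' v' else 0 := by
        intro u' v'; simp [hinj.eq_iff]
      rw [Finset.sum_congr rfl fun u' _ => Finset.sum_congr rfl fun v' _ => step u' v']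
      simp [ite_and]
    have hzero : ∀ u v : V, ¬ H.Adj u v → θ u v = 0 := hθ.2.1
    -- divergence computation
    have hdiv : ∀ w : W, ∑ a ∈ G.neighborFinset w, θ' w a
        = ∑ u : V, (if f u = w then ∑ v ∈ H.neighborFinset u, θ u v else 0) := by
      intro w
      rw [hθ'def]
      dsimp only
      rw [Finset.sum_comm]
      apply Finset.sum_congr rfl
      intro u _
      rw [Finset.sum_comm]
      have inner : ∀ v : V, ∑ a ∈ G.neighborFinset w, (if f u = w ∧ f v = a then θ u v else 0)
          = if f u = w ∧ G.Adj w (f v) then θ u v else 0 := by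
        intro v
        by_cases hw : f u = w
        · simp only [hw, eq_self_iff_true, true_and]
          rw [Finset.sum_ite_eq (G.neighborFinset w) (f v) (fun _ => θ u v)]
          by_cases hm : f v ∈ G.neighborFinset w
          · rw [if_pos hm, if_pos ((G.mem_neighborFinset w (f v)).mp hm)]
          · rw [if_neg hm, if_neg (fun ha => hm ((G.mem_neighborFinset w (f v)).mpr ha))]
        · simp only [hw, false_and, if_false]
          exact Finset.sum_eq_zero fun a _ => rfl
      rw [Finset.sum_congr rfl fun v _ => inner v]
      by_cases hw : f u = w
      · rw [if_pos hw]
        simp only [hw, eq_self_iff_true, true_and]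
        rw [show H.neighborFinset u = Finset.univ.filter (fun v => H.Adj u v) by
          ext v; simp [SimpleGraph.mem_neighborFinset]]
        rw [Finset.sum_filter]
        apply Finset.sum_congr rfl
        intro v _
        by_cases hadj : H.Adj u v
        · rw [if_pos (hw ▸ hedge u v hadj), if_pos hadj]
        · rw [hzero u v hadj, if_neg hadj, ite_self]
      · rw [if_neg hw]
        apply Finset.sum_eq_zero
        intro v _
        rw [if_neg (fun hc => hw hc.1)]
    refine ⟨θ', ⟨?_, ?_, ?_, ?_⟩, ?_⟩
    · -- antisymmetry
      intro a b
      rw [hθ'def]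
      dsimp only
      have step : ∀ u v : V, (if f u = b ∧ f v = a then θ u v else 0)
          = -(if f v = a ∧ f u = b then θ v u else 0) := by
        intro u v
        by_cases hc : f u = b ∧ f v = a
        · rw [if_pos hc, if_pos ⟨hc.2, hc.1⟩, hθ.1 u v]
        · rw [if_neg hc, if_neg (fun hh => hc ⟨hh.2, hh.1⟩), neg_zero]
      rw [Finset.sum_congr rfl fun u _ => Finset.sum_congr rfl fun v _ => step u v]
      simp only [Finset.sum_neg_distrib, neg_neg]
      exact Finset.sum_comm
    · -- support
      intro a b hnadj
      rw [hθ'def]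
      dsimp only
      apply Finset.sum_eq_zero; intro u _
      apply Finset.sum_eq_zero; intro v _
      by_cases hc : f u = a ∧ f v = b
      · rw [if_pos hc]
        by_cases hadj : H.Adj u v
        · exact absurd (hc.1 ▸ hc.2 ▸ hedge u v hadj) hnadj
        · exact hzero u v hadj
      · rw [if_neg hc]
    · -- divergence away from endpoints
      intro w hwx hwy
      rw [hdiv w]
      apply Finset.sum_eq_zero
      intro u _
      by_cases hfu : f u = w
      · rw [if_pos hfu]
        have hux : u ≠ x := fun hh => hwx (hh ▸ hfu).symm
        have huy : u ≠ y := fun hh => hwy (hh ▸ hfu).symm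
        exact hθ.2.2.1 u hux huy
      · rw [if_neg hfu]
    · -- divergence at source
      rw [hdiv (f x)]
      have step : ∀ u : V, (if f u = f x then ∑ v ∈ H.neighborFinset u, θ u v else 0)
          = if u = x then ∑ v ∈ H.neighborFinset u, θ u v else 0 := by
        intro u; simp [hinj.eq_iff]
      rw [Finset.sum_congr rfl fun u _ => step u]
      rw [Finset.sum_ite_eq' Finset.univ x]
      rw [if_pos (Finset.mem_univ x), hθ.2.2.2]
      simp [hinj.eq_iff]
    · -- energy equality
      unfold flowEnergy
      congr 1
      have g_inj : Function.Injective (fun q : V × V => ((f q.1, f q.2) : W × W)) := by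
        intro q1 q2 hq
        simp only [Prod.mk.injEq] at hq
        exact Prod.ext (hinj hq.1) (hinj hq.2)
      rw [show (∑ q : V × V, θ q.1 q.2 ^ 2)
          = ∑ p ∈ Finset.univ.image (fun q : V × V => ((f q.1, f q.2) : W × W)),
            θ' p.1 p.2 ^ 2 by
        rw [Finset.sum_image (fun a _ b _ hb => g_inj hb)]
        exact (Finset.sum_congr rfl fun q _ => by rw [key q.1 q.2]).symm]
      apply Finset.sum_subset (Finset.subset_univ _)
      intro p _ hp
      have hz : θ' p.1 p.2 = 0 := by
        rw [hθ'def]; dsimp only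
        apply Finset.sum_eq_zero; intro u _
        apply Finset.sum_eq_zero; intro v _
        rw [if_neg]
        rintro ⟨h1, h2⟩
        exact hp (Finset.mem_image.mpr ⟨(u, v), Finset.mem_univ _, by simp [h1, h2]⟩)
      rw [hz]; ring
  -- conclude via csInf
  have hne : { E : ℝ | ∃ θ : V → V → ℝ, IsUnitFlow H x y θ ∧ E = flowEnergy θ }.Nonempty := by
    obtain ⟨θ, hθ⟩ := flow_exists H ((hHconn x y).some)
    exact ⟨flowEnergy θ, θ, hθ, rfl⟩
  have hbdd : BddBelow { E : ℝ | ∃ θ : W → W → ℝ, IsUnitFlow G (f x) (f y) θ ∧ E = flowEnergy θ } := by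
    refine ⟨0, ?_⟩
    rintro E ⟨θ, _, rfl⟩
    unfold flowEnergy
    positivity
  exact csInf_le_csInf hbdd hne hsub
end

section
/- If a nondecreasing continuous function r : [1,∞) → [1,∞) satisfies r(t) ≤ c + c·∫_1^t r(s)^{1−η}/s^{(d−1)η} ds for all t ≥ 1, where η ∈ (0,1) and (d−1)η > 1, then r is bounded: sup_{t ≥ 1} r(t) < ∞. -/
open Real intervalIntegral

/-! Since `r` is nondecreasing, the integrand is at most `r(t)^{1-η} s^{-(d-1)η}`, and
`∫_1^∞ s^{-(d-1)η} ds = 1/((d-1)η - 1)` is finite. Together with `r ≥ 1` this turns the integral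
inequality into `r(t) ≤ K r(t)^{1-η}` with `K` independent of `t`, i.e. `r(t)^η ≤ K`. -/

lemma integral_one_rpow_neg_le {α t : ℝ} (hα : 1 < α) (ht : 1 ≤ t) :
    ∫ s in (1 : ℝ)..t, s ^ (-α) ≤ 1 / (α - 1) := by
  have h0 : (0 : ℝ) ∉ Set.uIcc 1 t := by
    rw [Set.uIcc_of_le ht]; exact fun h => by linarith [h.1]
  rw [integral_rpow (Or.inr ⟨by linarith, h0⟩), one_rpow,
    ← neg_div_neg_eq, neg_sub, neg_add, neg_neg, ← sub_eq_neg_add, ← sub_eq_add_neg]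
  gcongr
  linarith [rpow_pos_of_pos (zero_lt_one.trans_le ht) (1 - α)]

lemma integral_div_rpow_le_of_monotoneOn {f : ℝ → ℝ} {α t : ℝ} (hα : 1 < α) (ht : 1 ≤ t)
    (hf : MonotoneOn f (Set.Icc 1 t)) (hft : 0 ≤ f t) :
    ∫ s in (1 : ℝ)..t, f s / s ^ α ≤ f t / (α - 1) := by
  have hIcc : Set.uIcc 1 t = Set.Icc 1 t := Set.uIcc_of_le ht
  have hcont : ContinuousOn (fun s : ℝ => s ^ (-α)) (Set.uIcc 1 t) := fun s hs =>
    (continuousAt_rpow_const s _ (Or.inl (by rw [hIcc] at hs; linarith [hs.1]))).continuousWithinAt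
  have hdiv : ∀ s ∈ Set.Icc (1 : ℝ) t, f s / s ^ α = f s * s ^ (-α) := fun s hs => by
    rw [rpow_neg (by linarith [hs.1]), div_eq_mul_inv]
  calc ∫ s in (1 : ℝ)..t, f s / s ^ α = ∫ s in (1 : ℝ)..t, f s * s ^ (-α) :=
        integral_congr (by rwa [hIcc])
    _ ≤ ∫ s in (1 : ℝ)..t, f t * s ^ (-α) := by
        refine integral_mono_on ht ((hf.mono hIcc.le).intervalIntegrable.mul_continuousOn hcont)
          (hcont.intervalIntegrable.const_mul _) fun s hs => ?_
        exact mul_le_mul_of_nonneg_right (hf hs ⟨ht, le_rfl⟩ hs.2)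
            (rpow_nonneg (by linarith [hs.1]) _)
    _ = f t * ∫ s in (1 : ℝ)..t, s ^ (-α) := integral_const_mul _ _
    _ ≤ f t / (α - 1) := by
        rw [div_eq_mul_one_div]
        exact mul_le_mul_of_nonneg_left (integral_one_rpow_neg_le hα ht) hft

lemma le_rpow_inv_of_le_mul_rpow_one_sub {x K η : ℝ} (hx : 0 < x) (hη : 0 < η)
    (h : x ≤ K * x ^ (1 - η)) : x ≤ K ^ η⁻¹ := by
  have hxη : x ^ η ≤ K := by
    have hsplit : x ^ η * x ^ (1 - η) = x := by rw [← rpow_add hx]; norm_num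
    exact le_of_mul_le_mul_right (hsplit.trans_le h) (rpow_pos_of_pos hx _)
  calc x = (x ^ η) ^ η⁻¹ := (rpow_rpow_inv hx.le hη.ne').symm
    _ ≤ K ^ η⁻¹ := rpow_le_rpow (rpow_nonneg hx.le _) hxη (inv_nonneg.2 hη.le)

theorem stmt_19_general (c η : ℝ) (d : ℕ) (hc : 0 < c) (hη0 : 0 < η) (hη1 : η < 1)
    (hdη : 1 < ((d : ℝ) - 1) * η)
    (r : ℝ → ℝ)
    (hrmono : MonotoneOn r (Set.Ici (1 : ℝ)))
    (hr1 : ∀ t, 1 ≤ t → 1 ≤ r t)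
    (hint : ∀ t, 1 ≤ t →
      r t ≤ c + c * ∫ s in (1:ℝ)..t, (r s) ^ (1 - η) / s ^ (((d : ℝ) - 1) * η)) :
    ∃ B : ℝ, ∀ t, 1 ≤ t → r t ≤ B := by
  set α : ℝ := ((d : ℝ) - 1) * η
  refine ⟨(c + c / (α - 1)) ^ η⁻¹, fun t ht => ?_⟩
  have hrt : 1 ≤ r t := hr1 t ht
  have hpow : 1 ≤ r t ^ (1 - η) := one_le_rpow hrt (by linarith)
  have hmono : MonotoneOn (fun s => r s ^ (1 - η)) (Set.Icc 1 t) := fun x hx y hy hxy =>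
    rpow_le_rpow (by linarith [hr1 x hx.1]) (hrmono hx.1 hy.1 hxy) (by linarith)
  have hbound := integral_div_rpow_le_of_monotoneOn hdη ht hmono (by positivity)
  refine le_rpow_inv_of_le_mul_rpow_one_sub (by linarith) hη0 ?_
  calc r t ≤ c + c * (r t ^ (1 - η) / (α - 1)) := (hint t ht).trans (by gcongr)
    _ ≤ c * r t ^ (1 - η) + c * (r t ^ (1 - η) / (α - 1)) := by
        gcongr; exact le_mul_of_one_le_right hc.le hpow
    _ = (c + c / (α - 1)) * r t ^ (1 - η) := by ring

theorem stmt_19 (c η : ℝ) (d : ℕ) (hc : 0 < c) (hη0 : 0 < η) (hη1 : η < 1)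
    (hd : 2 ≤ d) (hdη : 1 < ((d : ℝ) - 1) * η)
    (r : ℝ → ℝ)
    (hrcont : ContinuousOn r (Set.Ici (1 : ℝ)))
    (hrmono : MonotoneOn r (Set.Ici (1 : ℝ)))
    (hr1 : ∀ t, 1 ≤ t → 1 ≤ r t)
    (hint : ∀ t, 1 ≤ t →
      r t ≤ c + c * ∫ s in (1:ℝ)..t, (r s) ^ (1 - η) / s ^ (((d : ℝ) - 1) * η)) :
    ∃ B : ℝ, ∀ t, 1 ≤ t → r t ≤ B :=
  stmt_19_general c η d hc hη0 hη1 hdη r hrmono hr1 hint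
end
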